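/- arXiv:1801.07487 — 7 statements merged into one kernel-verified Lean document; each statement's English description precedes it below -/
import Mathlib

section
/- Let F be a field with at least N distinct elements x_0, ..., x_{N-1}, and let p, m, n be positive integers with N >= pmn + p - 1. For each worker i, define the polynomial h(x) = sum over j in [0,p), k in [0,m), j' in [0,p), k' in [0,n) of A_{j,k}^T B_{j',k'} x^{(p-1+j-j') + kp + k'pm}, where A_{j,k} and B_{j',k'} are matrices over F. Then for every subset K of {0,...,N-1} of size pmn + p - 1, the coefficients of h (and in particular each block C_{k,k'} = sum_{j=0}^{p-1} A_{j,k}^T B_{j,k'}, which is the coefficient of degree p-1+kp+k'pm) are uniquely determined by the values {h(x_i) : i in K}. -/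
open Matrix Finset

lemma digit_unique {p m n j j' k k0 k' k0' : ℕ}
    (hj : j < p) (hj' : j' < p) (hk : k < m) (hk0 : k0 < m) (hk' : k' < n) (hk0' : k0' < n)
    (h : j + p * (k + m * k') = j' + p * (k0 + m * k0')) :
    j = j' ∧ k = k0 ∧ k' = k0' := by
  have hp : 0 < p := lt_of_le_of_lt (Nat.zero_le j) hj
  have hm : 0 < m := lt_of_le_of_lt (Nat.zero_le k) hk
  have h1 : j = j' := by
    have := congrArg (· % p) h
    simpa [Nat.add_mul_mod_self_left, Nat.mod_eq_of_lt hj, Nat.mod_eq_of_lt hj'] using this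
  subst h1
  have h2' : p * (k + m * k') = p * (k0 + m * k0') := by omega
  have h2 : k + m * k' = k0 + m * k0' := Nat.eq_of_mul_eq_mul_left hp h2'
  have h3 : k = k0 := by
    have := congrArg (· % m) h2
    simpa [Nat.add_mul_mod_self_left, Nat.mod_eq_of_lt hk, Nat.mod_eq_of_lt hk0] using this
  subst h3
  have h4' : m * k' = m * k0' := by omega
  exact ⟨rfl, rfl, Nat.eq_of_mul_eq_mul_left hm h4'⟩

/-- Decodability of the entangled polynomial code: the blocks
`C_{k,k'} = ∑_j A_{j,k}ᵀ B_{j,k'}` are uniquely determined by the values of the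
polynomial `h` at any `pmn + p - 1` of the distinct points `x_i`. -/
theorem stmt_0 (F : Type*) [Field F] (N p m n sp rm tn : ℕ)
    (hp : 0 < p) (hm : 0 < m) (hn : 0 < n)
    (hN : p * m * n + p - 1 ≤ N)
    (x : Fin N → F) (hx : Function.Injective x)
    (A A' : Fin p → Fin m → Matrix (Fin sp) (Fin rm) F)
    (B B' : Fin p → Fin n → Matrix (Fin sp) (Fin tn) F)
    (K : Finset (Fin N)) (hK : K.card = p * m * n + p - 1)
    (hagree : ∀ i ∈ K,
      (∑ j : Fin p, ∑ k : Fin m, ∑ j' : Fin p, ∑ k' : Fin n,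
        x i ^ ((p - 1 + (j : ℕ) - (j' : ℕ)) + (k : ℕ) * p + (k' : ℕ) * p * m) •
          ((A j k)ᵀ * B j' k')) =
      ∑ j : Fin p, ∑ k : Fin m, ∑ j' : Fin p, ∑ k' : Fin n,
        x i ^ ((p - 1 + (j : ℕ) - (j' : ℕ)) + (k : ℕ) * p + (k' : ℕ) * p * m) •
          ((A' j k)ᵀ * B' j' k')) :
    ∀ (k : Fin m) (k' : Fin n),
      ∑ j : Fin p, (A j k)ᵀ * B j k' = ∑ j : Fin p, (A' j k)ᵀ * B' j k' := by
  classical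
  intro k0 k0'
  ext a b
  rw [Matrix.sum_apply, Matrix.sum_apply]
  -- the exponent function
  set e : Fin p × Fin m × Fin p × Fin n → ℕ := fun t =>
    (p - 1 + (t.1 : ℕ) - (t.2.2.1 : ℕ)) + (t.2.1 : ℕ) * p + (t.2.2.2 : ℕ) * p * m with he
  set E0 : ℕ := (p - 1) + (k0 : ℕ) * p + (k0' : ℕ) * p * m with hE0
  -- entrywise difference coefficients
  set c : Fin p × Fin m × Fin p × Fin n → F := fun t =>
    ((A t.1 t.2.1)ᵀ * B t.2.2.1 t.2.2.2) a b - ((A' t.1 t.2.1)ᵀ * B' t.2.2.1 t.2.2.2) a b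
    with hc
  set q : Polynomial F := ∑ t : Fin p × Fin m × Fin p × Fin n,
    Polynomial.monomial (e t) (c t) with hq
  -- degree bound
  obtain ⟨p', rfl⟩ : ∃ p', p = p' + 1 := ⟨p - 1, by omega⟩
  obtain ⟨m', rfl⟩ : ∃ m', m = m' + 1 := ⟨m - 1, by omega⟩
  obtain ⟨n', rfl⟩ : ∃ n', n = n' + 1 := ⟨n - 1, by omega⟩
  have h1le : 1 ≤ (p' + 1) * (m' + 1) * (n' + 1) := Nat.one_le_iff_ne_zero.2 (by positivity)
  have hub : ∀ t : Fin (p' + 1) × Fin (m' + 1) × Fin (p' + 1) × Fin (n' + 1),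
      e t ≤ (p' + 1) * (m' + 1) * (n' + 1) + (p' + 1) - 2 := by
    intro ⟨j, k, j', k'⟩
    have h1 : (j : ℕ) ≤ p' := by omega
    have h2 : (k : ℕ) ≤ m' := by omega
    have h3 : (k' : ℕ) ≤ n' := by omega
    have hid : 2 * p' + m' * (p' + 1) + n' * ((p' + 1) * (m' + 1)) + 2
        = (p' + 1) * (m' + 1) * (n' + 1) + (p' + 1) := by ring
    have hb1 : (k : ℕ) * (p' + 1) ≤ m' * (p' + 1) := Nat.mul_le_mul_right _ h2
    have hb2 : (k' : ℕ) * (p' + 1) * (m' + 1) ≤ n' * ((p' + 1) * (m' + 1)) := by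
      rw [mul_assoc]; exact Nat.mul_le_mul_right _ h3
    simp only [he]
    omega
  have hdeg : q.natDegree < (p' + 1) * (m' + 1) * (n' + 1) + (p' + 1) - 1 := by
    have hsum := Polynomial.natDegree_sum_le_of_forall_le
      (s := (univ : Finset (Fin (p' + 1) × Fin (m' + 1) × Fin (p' + 1) × Fin (n' + 1))))
      (fun t => Polynomial.monomial (e t) (c t))
      (fun t _ => (Polynomial.natDegree_monomial_le (c t)).trans (hub t))
    rw [← hq] at hsum
    omega
  -- q vanishes on K
  have heval : ∀ i : K, q.eval (x i) = 0 := by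
    rintro ⟨i, hi⟩
    have h' := congrFun (congrFun (hagree i hi) a) b
    simp only [Matrix.sum_apply, Matrix.smul_apply, smul_eq_mul] at h'
    simp only [hq, Polynomial.eval_finset_sum, Polynomial.eval_monomial, hc,
      Fintype.sum_prod_type, sub_mul]
    simp only [Finset.sum_sub_distrib]
    rw [sub_eq_zero]
    simpa [he, mul_comm, mul_assoc, mul_left_comm] using h'
  have hcard : q.natDegree < Fintype.card K := by
    rwa [Fintype.card_coe, hK]
  have hq0 : q = 0 :=
    Polynomial.eq_zero_of_natDegree_lt_card_of_eval_eq_zero q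
      (fun i j hij => Subtype.ext (hx hij)) heval hcard
  -- extract the coefficient at E0
  have hcoeff : q.coeff E0 = 0 := by rw [hq0]; simp
  rw [hq, Polynomial.finset_sum_coeff] at hcoeff
  simp only [Polynomial.coeff_monomial] at hcoeff
  have hiff : ∀ t : Fin (p' + 1) × Fin (m' + 1) × Fin (p' + 1) × Fin (n' + 1),
      e t = E0 ↔ (t.2.2.2 = k0' ∧ t.2.2.1 = t.1 ∧ t.2.1 = k0) := by
    rintro ⟨j, k, j', k'⟩
    simp only [he, hE0]
    constructor
    · intro h
      have e1 : (k : ℕ) * (p'+1) + (k' : ℕ) * (p'+1) * (m'+1)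
          = (p'+1) * ((k : ℕ) + (m'+1) * (k' : ℕ)) := by ring
      have e2 : (k0 : ℕ) * (p'+1) + (k0' : ℕ) * (p'+1) * (m'+1)
          = (p'+1) * ((k0 : ℕ) + (m'+1) * (k0' : ℕ)) := by ring
      have key : (j : ℕ) + (p'+1) * ((k : ℕ) + (m'+1) * (k' : ℕ))
          = (j' : ℕ) + (p'+1) * ((k0 : ℕ) + (m'+1) * (k0' : ℕ)) := by omega
      obtain ⟨h1, h2, h3⟩ := digit_unique j.isLt j'.isLt k.isLt k0.isLt k'.isLt k0'.isLt key
      exact ⟨Fin.ext h3, (Fin.ext h1).symm, Fin.ext h2⟩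
    · rintro ⟨rfl, rfl, rfl⟩
      omega
  rw [Finset.sum_congr rfl (fun t _ => by rw [if_congr (hiff t) rfl rfl])] at hcoeff
  simp only [Fintype.sum_prod_type, ite_and, Finset.sum_ite_eq', Finset.mem_univ,
    if_true] at hcoeff
  simp only [hc] at hcoeff
  rw [Finset.sum_sub_distrib, sub_eq_zero] at hcoeff
  exact hcoeff
end

section
/- Let F be a field, N, p, m, n positive integers, and suppose a linear code for distributed matrix multiplication with parameters p, m, n achieves recovery threshold K < N: i.e., there are vectors a_i in F^{pm}, b_i in F^{pn} for i in {0,...,N-1} and for each K-subset S of {0,...,N-1} a decoding function d_S such that d_S({(alpha . a_i)(beta . b_i)}_{i in S}) = alpha^T beta for all alpha in F^{p x m} and beta in F^{p x n} (identifying matrices with vectors). Then K >= pm + pn - 1. -/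
/-!
The argument only needs `Recovers`: if the products `A i α * B i β` vanish on `K` of the
workers, then `αᵀ * β = 0`. This property survives deleting a set `P` of
workers, lowering the threshold by `#P`, and restricting `α`, `β` to subspaces on which the
deleted products vanish.

For a nondegenerate pairing `Ψ` of `V` and `W`, pick `i₁` with `B i₁ ≠ 0`, let `u` represent
`B i₁` through `Ψ`, and pick `i₀ ≠ i₁` with `A i₀ u ≠ 0`; it exists because `K < N` leaves a
`K`-set of workers avoiding `i₁`. Then `Ψ` stays nondegenerate on `ker (A i₀) × ker (B i₁)`, so
two workers cost one dimension on each side, and induction gives `dim V + dim W ≤ K + 1`.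

For `n ≤ m`, the Frobenius pairing of `n` of the columns of `α` with `β` factors through
`αᵀ * β` and is separating in `β`. While its left kernel is nonzero, some worker of a `K`-set
does not vanish on it, and deleting that worker costs one dimension of `α` only. This ends in
the nondegenerate case, so `p * m + p * n ≤ K + 1`.
-/

open Matrix Finset

section

open Module LinearMap

variable {F V W Z ι : Type*} [Field F] [AddCommGroup V] [Module F V] [AddCommGroup W] [Module F W]

theorem Module.Dual.exists_smul_eq_of_ker_le {f g : Dual F V} (h : ker g ≤ ker f) :
    ∃ c : F, c • g = f := by
  have := mem_span_of_iInf_ker_le_ker (L := fun _ : Unit => g) (K := f) (by simpa using h)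
  rwa [Set.range_const, Submodule.mem_span_singleton] at this

namespace LinearMap

theorem SeparatingRight.compl₁₂_ker {W' : Type*} [AddCommGroup W'] [Module F W']
    {Ψ : V →ₗ[F] W →ₗ[F] F} (hΨ : Ψ.SeparatingRight) {f : Dual F V} {u : V} (hu : f u ≠ 0)
    (g : W' →ₗ[F] W) (hg : Function.Injective g) (hug : ∀ y, Ψ u (g y) = 0) :
    (Ψ.compl₁₂ (ker f).subtype g).SeparatingRight := by
  intro y hy
  obtain ⟨c, hc⟩ := Dual.exists_smul_eq_of_ker_le (f := Ψ.flip (g y)) (g := f)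
    fun x hx => hy ⟨x, hx⟩
  have hc0 : c = 0 := by
    simpa [hu, hug] using (LinearMap.congr_fun hc u).symm
  refine (g.map_eq_zero_iff hg).mp (hΨ _ fun x => ?_)
  simpa [hc0] using (LinearMap.congr_fun hc x).symm

theorem Nondegenerate.compl₁₂_ker_ker {Ψ : V →ₗ[F] W →ₗ[F] F} (hΨ : Ψ.Nondegenerate)
    {f : Dual F V} {g : Dual F W} {u : V} (hu : Ψ u = g) (hfu : f u ≠ 0) :
    (Ψ.compl₁₂ (ker f).subtype (ker g).subtype).Nondegenerate := by
  refine ⟨fun x hx => ?_, hΨ.2.compl₁₂_ker hfu _ Subtype.val_injective fun y => by simp [hu]⟩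
  obtain ⟨c, hc⟩ := Dual.exists_smul_eq_of_ker_le (f := Ψ x) (g := g) fun y hy => hx ⟨y, hy⟩
  have hxu : (x : V) = c • u := by
    refine sub_eq_zero.mp (hΨ.1 _ fun y => ?_)
    simp [← hc, hu]
  have hc0 : c = 0 := by
    simpa [hfu] using congrArg f hxu.symm
  exact Subtype.ext (by simp [hxu, hc0])

theorem Nondegenerate.isPerfPair [FiniteDimensional F V] {Ψ : V →ₗ[F] W →ₗ[F] F}
    (hΨ : Ψ.Nondegenerate) : Ψ.IsPerfPair :=
  .of_injective (ker_eq_bot.mp (separatingLeft_iff_ker_eq_bot.mp hΨ.1))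
    (ker_eq_bot.mp (separatingRight_iff_flip_ker_eq_bot.mp hΨ.2))

end LinearMap

/-- A decoder for every `K`-subset of `U` gives this: compare its outputs on `(α, β)` and
`(0, β)`. -/
def Recovers [Zero Z] (U : Finset ι) (K : ℕ) (A : ι → Dual F V) (B : ι → Dual F W)
    (Φ : V → W → Z) : Prop :=
  ∀ S ⊆ U, #S = K → ∀ α β, (∀ i ∈ S, A i α * B i β = 0) → Φ α β = 0

namespace Recovers

variable [Zero Z] {U S : Finset ι} {K : ℕ} {A : ι → Dual F V} {B : ι → Dual F W}
  {Φ : V → W → Z}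

theorem mono {Z' : Type*} [Zero Z'] {Φ' : V → W → Z'} (h : Recovers U K A B Φ)
    (hΦ : ∀ α β, Φ α β = 0 → Φ' α β = 0) : Recovers U K A B Φ' :=
  fun S hSU hSK α β hprod => hΦ α β (h S hSU hSK α β hprod)

theorem swap (h : Recovers U K A B Φ) : Recovers U K B A fun β α => Φ α β :=
  fun S hSU hSK β α hprod => h S hSU hSK α β fun i hi => by rw [mul_comm]; exact hprod i hi

theorem apply_eq_zero (h : Recovers U K A B Φ) (hSU : S ⊆ U) (hSK : #S = K) {α : V}
    (hα : ∀ i ∈ S, A i α = 0) (β : W) : Φ α β = 0 :=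
  h S hSU hSK α β fun i hi => by rw [hα i hi, zero_mul]

theorem exists_apply_ne_zero (h : Recovers U K A B Φ) (hSU : S ⊆ U) (hSK : #S = K) {α : V}
    {β : W} (hαβ : Φ α β ≠ 0) : ∃ i ∈ S, A i α ≠ 0 := by
  by_contra! hα
  exact hαβ (h.apply_eq_zero hSU hSK hα β)

theorem finrank_le [FiniteDimensional F V] (h : Recovers U K A B Φ) (hKU : K ≤ #U)
    (hΦ : ∀ α, (∀ β, Φ α β = 0) → α = 0) : finrank F V ≤ K := by
  obtain ⟨S, hSU, hSK⟩ := exists_subset_card_eq hKU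
  have hinj : Function.Injective (LinearMap.pi fun i : S => A i) := by
    rw [← LinearMap.ker_eq_bot, LinearMap.ker_eq_bot']
    exact fun α hα => hΦ α (h.apply_eq_zero hSU hSK fun i hi => congrFun hα ⟨i, hi⟩)
  simpa [hSK] using LinearMap.finrank_le_finrank_of_injective hinj

theorem restrict [DecidableEq ι] {V' W' : Type*} [AddCommGroup V'] [Module F V'] [AddCommGroup W']
    [Module F W'] (h : Recovers U K A B Φ) {P : Finset ι} (hPU : P ⊆ U) (hPK : #P ≤ K)
    (f : V' →ₗ[F] V) (g : W' →ₗ[F] W) (hP : ∀ i ∈ P, ∀ x y, A i (f x) * B i (g y) = 0) :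
    Recovers (U \ P) (K - #P) (fun i => A i ∘ₗ f) (fun i => B i ∘ₗ g)
      (fun x y => Φ (f x) (g y)) := by
  intro S hSU hSK x y hprod
  refine h (S ∪ P) (union_subset (hSU.trans sdiff_subset) hPU) ?_ _ _ fun i hi => ?_
  · rw [card_union_of_disjoint (disjoint_of_subset_left hSU sdiff_disjoint), hSK]
    omega
  · rcases mem_union.mp hi with hi | hi
    exacts [hprod i hi, hP i hi x y]

theorem exists_pair_of_nondegenerate [FiniteDimensional F V] [Nontrivial W]
    {Ψ : V →ₗ[F] W →ₗ[F] F} (h : Recovers U K A B fun α β => Ψ α β) (hΨ : Ψ.Nondegenerate)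
    (hKU : K < #U) : ∃ i₀ ∈ U, ∃ i₁ ∈ U, i₀ ≠ i₁ ∧ B i₁ ≠ 0 ∧ ∃ u, Ψ u = B i₁ ∧ A i₀ u ≠ 0 := by
  classical
  have := hΨ.isPerfPair
  obtain ⟨S, hSU, hSK⟩ := exists_subset_card_eq hKU.le
  obtain ⟨β, hβ⟩ := exists_ne (0 : W)
  obtain ⟨α, hαβ⟩ : ∃ α, Ψ α β ≠ 0 := by
    by_contra! hβ0
    exact hβ (hΨ.2 β hβ0)
  obtain ⟨i₁, hi₁S, hi₁⟩ := h.swap.exists_apply_ne_zero hSU hSK hαβ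
  have hu : Ψ (Ψ.toPerfPair.symm (B i₁)) = B i₁ := apply_symm_toPerfPair_self Ψ (B i₁)
  obtain ⟨S', hS'U, hS'K⟩ := exists_subset_card_eq (s := U.erase i₁) (n := K)
    (by rw [card_erase_of_mem (hSU hi₁S)]; omega)
  obtain ⟨i₀, hi₀S', hi₀⟩ := h.exists_apply_ne_zero (hS'U.trans (erase_subset _ _)) hS'K
    (show Ψ _ β ≠ 0 by rwa [hu])
  exact ⟨i₀, mem_of_mem_erase (hS'U hi₀S'), i₁, hSU hi₁S, ne_of_mem_erase (hS'U hi₀S'),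
    fun h0 => hi₁ (by simp [h0]), _, hu, hi₀⟩

theorem finrank_add_finrank_le_of_nondegenerate [DecidableEq ι] [FiniteDimensional F V]
    {Ψ : V →ₗ[F] W →ₗ[F] F} (h : Recovers U K A B fun α β => Ψ α β) (hΨ : Ψ.Nondegenerate)
    (hKU : K < #U) : finrank F V + finrank F W ≤ K + 1 := by
  obtain ⟨d, hd⟩ : ∃ d, finrank F V = d := ⟨_, rfl⟩
  induction d generalizing V W U K with
  | zero =>
    have := hΨ.isPerfPair
    have := finrank_of_isPerfPair Ψ
    omega
  | succ d ih =>
    have := hΨ.isPerfPair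
    have hVW := finrank_of_isPerfPair Ψ
    have hKV : finrank F V ≤ K := h.finrank_le hKU.le hΨ.1
    rcases d with _ | d
    · omega
    have : FiniteDimensional F W := .of_finrank_pos (by omega)
    have : Nontrivial W := Module.nontrivial_of_finrank_pos (R := F) (by omega)
    obtain ⟨i₀, hi₀U, i₁, hi₁U, hi₀₁, hB₁, u, hu, hi₀⟩ := h.exists_pair_of_nondegenerate hΨ hKU
    have hPU : {i₀, i₁} ⊆ U := insert_subset hi₀U (singleton_subset_iff.mpr hi₁U)
    have hP : #{i₀, i₁} = 2 := card_pair hi₀₁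
    have hrec := h.restrict hPU (by omega) (ker (A i₀)).subtype (ker (B i₁)).subtype (by
      simp only [mem_insert, mem_singleton]
      rintro i (rfl | rfl) x y <;> simp)
    have hA₀ := Dual.finrank_ker_add_one_of_ne_zero (f := A i₀) fun h0 => hi₀ (by simp [h0])
    have hB₁ := Dual.finrank_ker_add_one_of_ne_zero hB₁
    have := ih hrec (hΨ.compl₁₂_ker_ker hu hi₀) (by rw [card_sdiff_of_subset hPU]; omega)
      (by omega)
    omega

theorem finrank_add_finrank_le [DecidableEq ι] [FiniteDimensional F V]
    (h : Recovers U K A B Φ) (hΦ : ∀ α, (∀ β, Φ α β = 0) → α = 0) {Ψ : V →ₗ[F] W →ₗ[F] F}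
    (hΨ : Ψ.SeparatingRight) (hΦΨ : ∀ α β, Φ α β = 0 → Ψ α β = 0) (hKU : K < #U) :
    finrank F V + finrank F W ≤ K + 1 := by
  obtain ⟨d, hd⟩ : ∃ d, finrank F V = d := ⟨_, rfl⟩
  induction d using Nat.strong_induction_on generalizing V U K A B Φ Ψ with
  | _ d ih =>
  by_cases hΨl : Ψ.SeparatingLeft
  · exact (h.mono hΦΨ).finrank_add_finrank_le_of_nondegenerate ⟨hΨl, hΨ⟩ hKU
  obtain ⟨c, hc, hc0⟩ : ∃ c, Ψ c = 0 ∧ c ≠ 0 := by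
    simpa [separatingLeft_iff_linear_nontrivial] using hΨl
  obtain ⟨S, hSU, hSK⟩ := exists_subset_card_eq hKU.le
  obtain ⟨β, hβ⟩ : ∃ β, Φ c β ≠ 0 := by
    by_contra! hcβ
    exact hc0 (hΦ c hcβ)
  obtain ⟨i, hiS, hi⟩ := h.exists_apply_ne_zero hSU hSK hβ
  have hK : 0 < K := hSK ▸ card_pos.mpr ⟨i, hiS⟩
  have hiU : {i} ⊆ U := singleton_subset_iff.mpr (hSU hiS)
  have hrec := h.restrict hiU (by rwa [card_singleton]) (ker (A i)).subtype LinearMap.id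
    (by simp +contextual)
  have hAi := Dual.finrank_ker_add_one_of_ne_zero (f := A i) fun h0 => hi (by simp [h0])
  have := ih _ (by omega) hrec (fun x hx => Subtype.ext (hΦ x hx))
    (hΨ.compl₁₂_ker hi LinearMap.id Function.injective_id (by simp [hc])) (fun x y => hΦΨ x y)
    (by rw [card_sdiff_of_subset hiU, card_singleton]; omega) rfl
  simp only [card_singleton] at this
  omega

end Recovers

variable {κ μ ν : Type*} [Fintype κ]

def Matrix.frobeniusPairing [Fintype ν] (σ : ν → μ) :
    Matrix κ μ F →ₗ[F] Matrix κ ν F →ₗ[F] F :=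
  LinearMap.mk₂ F (fun α β => ∑ j, ∑ k, α j (σ k) * β j k)
    (fun _ _ _ => by simp only [add_apply, add_mul, sum_add_distrib])
    (fun _ _ _ => by simp only [smul_apply, smul_eq_mul, mul_assoc, mul_sum])
    (fun _ _ _ => by simp only [add_apply, mul_add, sum_add_distrib])
    (fun _ _ _ => by simp only [smul_apply, smul_eq_mul, mul_left_comm, mul_sum])

theorem Matrix.frobeniusPairing_eq_sum_transpose_mul [Fintype ν] (σ : ν → μ)
    (α : Matrix κ μ F) (β : Matrix κ ν F) :
    frobeniusPairing σ α β = ∑ k, (αᵀ * β) (σ k) k := by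
  simp only [frobeniusPairing, mk₂_apply, mul_apply, transpose_apply]
  exact sum_comm

theorem Matrix.separatingRight_frobeniusPairing [Fintype ν] {σ : ν → μ}
    (hσ : Function.Injective σ) : (frobeniusPairing σ : Matrix κ μ F →ₗ[F] _).SeparatingRight := by
  classical
  intro β hβ
  ext j k
  simpa [frobeniusPairing, single_apply, hσ.eq_iff, ite_and] using hβ (single j (σ k) 1)

theorem Matrix.eq_zero_of_forall_transpose_mul_eq_zero [Nonempty ν] {α : Matrix κ μ F}
    (hα : ∀ β : Matrix κ ν F, αᵀ * β = 0) : α = 0 := by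
  classical
  ext j k
  obtain ⟨l⟩ := ‹Nonempty ν›
  simpa using congrFun (congrFun (hα (single j l 1)) k) l

theorem Recovers.card_mul_add_card_mul_le_of_embedding [DecidableEq ι] [Fintype μ] [Fintype ν]
    [Nonempty ν] {U : Finset ι} {K : ℕ} {A : ι → Dual F (Matrix κ μ F)}
    {B : ι → Dual F (Matrix κ ν F)} (h : Recovers U K A B fun α β => αᵀ * β) (σ : ν ↪ μ)
    (hKU : K < #U) : Fintype.card κ * Fintype.card μ + Fintype.card κ * Fintype.card ν ≤ K + 1 := by
  have := h.finrank_add_finrank_le (fun _ => eq_zero_of_forall_transpose_mul_eq_zero)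
    (separatingRight_frobeniusPairing σ.injective)
    (fun α β hαβ => by simp [frobeniusPairing_eq_sum_transpose_mul, hαβ]) hKU
  simpa [finrank_matrix] using this

theorem Recovers.card_mul_add_card_mul_le [DecidableEq ι] [Fintype μ] [Fintype ν]
    [Nonempty μ] [Nonempty ν] {U : Finset ι} {K : ℕ} {A : ι → Dual F (Matrix κ μ F)}
    {B : ι → Dual F (Matrix κ ν F)} (h : Recovers U K A B fun α β => αᵀ * β) (hKU : K < #U) :
    Fintype.card κ * Fintype.card μ + Fintype.card κ * Fintype.card ν ≤ K + 1 := by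
  rcases le_total (Fintype.card ν) (Fintype.card μ) with hνμ | hμν
  · obtain ⟨σ⟩ := Function.Embedding.nonempty_of_card_le hνμ
    exact h.card_mul_add_card_mul_le_of_embedding σ hKU
  · obtain ⟨σ⟩ := Function.Embedding.nonempty_of_card_le hμν
    have hswap : Recovers U K B A fun β α => βᵀ * α :=
      h.swap.mono fun β α hαβ => by simpa [transpose_mul] using congrArg transpose hαβ
    have := hswap.card_mul_add_card_mul_le_of_embedding σ hKU
    omega

end

theorem stmt_5_general (F : Type*) [Field F] (N p m n K : ℕ)
    (hm : 0 < m) (hn : 0 < n) (hKN : K < N)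
    (a : Fin N → Fin p → Fin m → F) (b : Fin N → Fin p → Fin n → F)
    (d : (S : Finset (Fin N)) → (({i : Fin N // i ∈ S} → F) → Matrix (Fin m) (Fin n) F))
    (hd : ∀ S : Finset (Fin N), S.card = K →
      ∀ (α : Matrix (Fin p) (Fin m) F) (β : Matrix (Fin p) (Fin n) F),
        d S (fun i => (∑ j, ∑ k, α j k * a i.1 j k) * (∑ j, ∑ k, β j k * b i.1 j k))
          = αᵀ * β) :
    p * m + p * n - 1 ≤ K := by
  have : Nonempty (Fin m) := ⟨⟨0, hm⟩⟩
  have : Nonempty (Fin n) := ⟨⟨0, hn⟩⟩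
  have hrec : Recovers univ K (fun i => (frobeniusPairing id).flip (a i))
      (fun i => (frobeniusPairing id).flip (b i)) fun α β => αᵀ * β := by
    intro S _ hSK α β hprod
    calc αᵀ * β = d S fun i => (∑ j, ∑ k, α j k * a i.1 j k) * ∑ j, ∑ k, β j k * b i.1 j k :=
          (hd S hSK α β).symm
      _ = d S fun i => (∑ j, ∑ k, (0 : Matrix (Fin p) (Fin m) F) j k * a i.1 j k) *
            ∑ j, ∑ k, β j k * b i.1 j k :=
          congrArg (d S) (funext fun i => (hprod i i.2).trans (by simp))
      _ = 0 := by rw [hd S hSK 0 β, transpose_zero, Matrix.zero_mul]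
  have := hrec.card_mul_add_card_mul_le (by simpa using hKN)
  simp only [Fintype.card_fin] at this
  omega

/-- Linear-code converse bound (Lemma 1): any linear code for distributed matrix
multiplication with recovery threshold `K < N` satisfies `K ≥ pm + pn - 1`. -/
theorem stmt_5 (F : Type*) [Field F] (N p m n K : ℕ)
    (hp : 0 < p) (hm : 0 < m) (hn : 0 < n) (hKN : K < N)
    (a : Fin N → Fin p → Fin m → F) (b : Fin N → Fin p → Fin n → F)
    (d : (S : Finset (Fin N)) → (({i : Fin N // i ∈ S} → F) → Matrix (Fin m) (Fin n) F))
    (hd : ∀ S : Finset (Fin N), S.card = K →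
      ∀ (α : Matrix (Fin p) (Fin m) F) (β : Matrix (Fin p) (Fin n) F),
        d S (fun i => (∑ j, ∑ k, α j k * a i.1 j k) * (∑ j, ∑ k, β j k * b i.1 j k))
          = αᵀ * β) :
    p * m + p * n - 1 ≤ K :=
  stmt_5_general F N p m n K hm hn hKN a b d hd
end

section
/- Under the hypotheses of the linear-code converse (a linear code with recovery threshold K < N given by vectors a_i in F^{pm}, b_i in F^{pn}), for every subset S of {0,...,N-1} of size K, the vectors {a_i : i in S} span F^{pm}. That is: if alpha in F^{p x m} is nonzero, then there exists i in S with (vectorization of alpha) . a_i != 0. -/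
open Matrix Finset

/-- In any linear code with recovery threshold `K < N`, for every `K`-subset `S`
the encoding vectors `{a_i : i ∈ S}` span `F^{pm}`: for every nonzero `α` there is
`i ∈ S` with `⟨vec(α), a_i⟩ ≠ 0`. -/
theorem stmt_6 (F : Type*) [Field F] (N p m n K : ℕ)
    (hp : 0 < p) (hm : 0 < m) (hn : 0 < n) (hKN : K < N)
    (a : Fin N → Fin p → Fin m → F) (b : Fin N → Fin p → Fin n → F)
    (d : (S : Finset (Fin N)) → (({i : Fin N // i ∈ S} → F) → Matrix (Fin m) (Fin n) F))
    (hd : ∀ S : Finset (Fin N), S.card = K →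
      ∀ (α : Matrix (Fin p) (Fin m) F) (β : Matrix (Fin p) (Fin n) F),
        d S (fun i => (∑ j, ∑ k, α j k * a i.1 j k) * (∑ j, ∑ k, β j k * b i.1 j k))
          = αᵀ * β) :
    ∀ S : Finset (Fin N), S.card = K →
      ∀ α : Matrix (Fin p) (Fin m) F, α ≠ 0 →
        ∃ i ∈ S, (∑ j, ∑ k, α j k * a i j k) ≠ 0 := by
  intro S hS α hα
  by_contra h
  push_neg at h
  -- every β gives the same input to d, namely 0
  have hfun : ∀ β : Matrix (Fin p) (Fin n) F,
      (fun i : {i : Fin N // i ∈ S} =>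
        (∑ j, ∑ k, α j k * a i.1 j k) * (∑ j, ∑ k, β j k * b i.1 j k))
      = fun _ => (0 : F) := by
    intro β
    funext i
    rw [h i.1 i.2, zero_mul]
  have key : ∀ β : Matrix (Fin p) (Fin n) F, αᵀ * β = αᵀ * (0 : Matrix (Fin p) (Fin n) F) := by
    intro β
    rw [← hd S hS α β, ← hd S hS α (0 : Matrix (Fin p) (Fin n) F), hfun β, hfun 0]
  -- α ≠ 0 gives an entry α j₀ k₀ ≠ 0
  obtain ⟨j₀, k₀, hjk⟩ : ∃ j k, α j k ≠ 0 := by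
    by_contra hc
    push_neg at hc
    exact hα (by ext j k; simpa using hc j k)
  obtain ⟨k₁⟩ : Nonempty (Fin n) := ⟨⟨0, hn⟩⟩
  -- take β with a single 1 at (j₀, k₁)
  have := key (Matrix.single j₀ k₁ 1)
  have h2 := congrFun (congrFun this k₀) k₁
  simp [Matrix.mul_apply, Matrix.single, Matrix.transpose_apply,
    Finset.sum_ite_eq', mul_comm] at h2
  exact hjk h2
end

section
/- For a distributed matrix multiplication problem over a finite field F with parameters p, m, n and N workers, any (possibly non-linear) computation strategy — encoders f_i : F^{s x r} -> F^{(s/p) x (r/m)}, g_i : F^{s x t} -> F^{(s/p) x (t/n)}, workers returning C_i = f_i(A)^T g_i(B), and decoders recovering A^T B from any K workers' results — satisfies K >= max(pm, pn). -/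
/-!
If the outputs of the workers in a recovery set `S` determine `Aᵀ * B` for every `B`, they
determine `A` (test `Aᵀ * B` against matrix units `B`); since a worker's output depends on `A`
only through its encoding `fᵢ A`, the map `A ↦ (fᵢ A)_{i ∈ S}` is injective. Counting,
`|F| ^ (p s · m r) ≤ (|F| ^ (s r)) ^ |S|`, i.e. `p m ≤ |S| = K`. The same argument applied to `B`
gives `p n ≤ K`.
-/

open Matrix Finset Function

namespace Matrix

variable {l m n k α : Type*} [Fintype m] [Semiring α]

theorem ext_of_forall_mul_right_eq [Nonempty k] {A A' : Matrix l m α}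
    (h : ∀ B : Matrix m k α, A * B = A' * B) : A = A' := by
  classical
  ext i j
  obtain ⟨c⟩ := ‹Nonempty k›
  simpa using congrFun (congrFun (h (single j c 1)) i) c

theorem ext_of_forall_mul_left_eq [Nonempty k] {B B' : Matrix m n α}
    (h : ∀ A : Matrix k m α, A * B = A * B') : B = B' := by
  classical
  ext i j
  obtain ⟨c⟩ := ‹Nonempty k›
  simpa using congrFun (congrFun (h (single c i 1)) c) j

theorem transpose_mul_injective_left [Nonempty k] :
    Injective (fun (A : Matrix m l α) (B : Matrix m k α) => Aᵀ * B) := fun _ _ h =>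
  transpose_injective (ext_of_forall_mul_right_eq (congrFun h))

theorem transpose_mul_injective_right [Nonempty k] :
    Injective (fun (B : Matrix m n α) (A : Matrix m k α) => Aᵀ * B) := fun _ _ h =>
  ext_of_forall_mul_left_eq fun A => by simpa using congrFun h Aᵀ

end Matrix

theorem injective_encodings_of_decoder {ι X Y U W R : Type*} (u : ι → X → U)
    (c : ι → U → Y → W) (d : (ι → W) → R) (Φ : X → Y → R)
    (hd : ∀ x y, d (fun i => c i (u i x) y) = Φ x y) (hΦ : Injective Φ) :
    Injective (fun x i => u i x) := fun x x' h =>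
  hΦ <| funext fun y => by
    rw [← hd, ← hd]
    exact congrArg (fun e : ι → U => d fun i => c i (e i) y) h

theorem mul_le_card_of_injective {F ι : Type*} [Finite F] [Nontrivial F] [Finite ι]
    {p m s r : ℕ} (hs : 0 < s) (hr : 0 < r)
    {φ : Matrix (Fin (p * s)) (Fin (m * r)) F → ι → Matrix (Fin s) (Fin r) F}
    (hφ : Injective φ) : p * m ≤ Nat.card ι := by
  have hcard := Nat.card_le_card_of_injective φ hφ
  simp only [Matrix, Nat.card_fun, Nat.card_eq_fintype_card, Fintype.card_fin, ← pow_mul] at hcard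
  have hexp := (Nat.pow_le_pow_iff_right Finite.one_lt_card).mp hcard
  refine Nat.le_of_mul_le_mul_right ?_ (Nat.mul_pos hs hr)
  calc p * m * (s * r) = m * r * (p * s) := by ring
    _ ≤ r * s * Nat.card ι := hexp
    _ = Nat.card ι * (s * r) := by ring

theorem stmt_11_general (F : Type*) [Field F] [Fintype F] (N K p m n sp rm tn : ℕ)
    (hm : 0 < m) (hn : 0 < n)
    (hsp : 0 < sp) (hrm : 0 < rm) (htn : 0 < tn) (hKN : K ≤ N)
    (f : Fin N → Matrix (Fin (p * sp)) (Fin (m * rm)) F → Matrix (Fin sp) (Fin rm) F)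
    (g : Fin N → Matrix (Fin (p * sp)) (Fin (n * tn)) F → Matrix (Fin sp) (Fin tn) F)
    (d : (S : Finset (Fin N)) →
      (({i : Fin N // i ∈ S} → Matrix (Fin rm) (Fin tn) F) →
        Matrix (Fin (m * rm)) (Fin (n * tn)) F))
    (hd : ∀ S : Finset (Fin N), S.card = K →
      ∀ (A : Matrix (Fin (p * sp)) (Fin (m * rm)) F)
        (B : Matrix (Fin (p * sp)) (Fin (n * tn)) F),
        d S (fun i => (f i.1 A)ᵀ * g i.1 B) = Aᵀ * B) :
    p * m ≤ K ∧ p * n ≤ K := by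
  obtain ⟨S, -, hS⟩ := exists_subset_card_eq (s := (univ : Finset (Fin N))) (by simpa using hKN)
  have : Nonempty (Fin (m * rm)) := ⟨⟨0, Nat.mul_pos hm hrm⟩⟩
  have : Nonempty (Fin (n * tn)) := ⟨⟨0, Nat.mul_pos hn htn⟩⟩
  have hf := injective_encodings_of_decoder (fun i : S => f i) (fun i U B => Uᵀ * g i B) (d S)
    _ (hd S hS) transpose_mul_injective_left
  have hg := injective_encodings_of_decoder (fun i : S => g i) (fun i V A => (f i A)ᵀ * V) (d S)
    _ (fun B A => hd S hS A B) transpose_mul_injective_right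
  have hcard : Nat.card S = K := by simpa using hS
  exact hcard ▸ ⟨mul_le_card_of_injective hsp hrm hf, mul_le_card_of_injective hsp htn hg⟩

/-- Information-theoretic converse (Lemma 2): over a finite field, any (possibly
non-linear) computation strategy with recovery threshold `K ≤ N` satisfies
`K ≥ max(pm, pn)`. -/
theorem stmt_11 (F : Type*) [Field F] [Fintype F] (N K p m n sp rm tn : ℕ)
    (hp : 0 < p) (hm : 0 < m) (hn : 0 < n)
    (hsp : 0 < sp) (hrm : 0 < rm) (htn : 0 < tn) (hKN : K ≤ N)
    (f : Fin N → Matrix (Fin (p * sp)) (Fin (m * rm)) F → Matrix (Fin sp) (Fin rm) F)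
    (g : Fin N → Matrix (Fin (p * sp)) (Fin (n * tn)) F → Matrix (Fin sp) (Fin tn) F)
    (d : (S : Finset (Fin N)) →
      (({i : Fin N // i ∈ S} → Matrix (Fin rm) (Fin tn) F) →
        Matrix (Fin (m * rm)) (Fin (n * tn)) F))
    (hd : ∀ S : Finset (Fin N), S.card = K →
      ∀ (A : Matrix (Fin (p * sp)) (Fin (m * rm)) F)
        (B : Matrix (Fin (p * sp)) (Fin (n * tn)) F),
        d S (fun i => (f i.1 A)ᵀ * g i.1 B) = Aᵀ * B) :
    p * m ≤ K ∧ p * n ≤ K :=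
  stmt_11_general F N K p m n sp rm tn hm hn hsp hrm htn hKN f g d hd
end

section
/- Consider distributed convolution of a = (a_0,...,a_{m-1}) and b = (b_0,...,b_{n-1}) (each a_i, b_j in F^s) using N workers, where worker i stores linear encodings A_i = sum_j L_{ij}(a_j) and B_i = sum_j M_{ij}(b_j) (linear in a and b respectively, each of size s) and returns A_i * B_i. If the master can always recover a * b from the results of some fixed subset S of workers, then |S| >= m + n - 1. -/
open Polynomial Finset

/-- If the block-sum polynomial vanishes, each block vanishes. -/
lemma blocks_eq_zero {F : Type*} [Field F] {m s : ℕ} (hs : 0 < s)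
    (a : Fin m → Polynomial.degreeLT F s)
    (h : (∑ j : Fin m, (a j : Polynomial F) * Polynomial.X ^ ((j : ℕ) * s)) = 0) :
    a = 0 := by
  funext j0
  have hdeg : ∀ j : Fin m, (a j : Polynomial F).degree < (s : ℕ) :=
    fun j => Polynomial.mem_degreeLT.mp (a j).2
  suffices hz : (a j0 : Polynomial F) = 0 by
    exact Subtype.ext (by simpa using hz)
  ext k
  rw [Polynomial.coeff_zero]
  by_cases hk : k < s
  · have hc := congrArg (fun p => Polynomial.coeff p ((j0 : ℕ) * s + k)) h
    simp only [Polynomial.coeff_zero, Polynomial.finset_sum_coeff] at hc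
    rw [Finset.sum_eq_single j0] at hc
    · rwa [Polynomial.coeff_mul_X_pow', if_pos (Nat.le_add_right _ _),
        Nat.add_sub_cancel_left] at hc
    · intro j _ hj
      rw [Polynomial.coeff_mul_X_pow']
      by_cases hle : (j : ℕ) * s ≤ (j0 : ℕ) * s + k
      · rw [if_pos hle]
        apply Polynomial.coeff_eq_zero_of_degree_lt
        refine lt_of_lt_of_le (hdeg j) ?_
        have hjlt : (j : ℕ) < j0 := by
          rcases lt_or_gt_of_ne (fun he => hj (Fin.ext he)) with h1 | h1
          · exact h1
          · exfalso
            have : (j0 : ℕ) * s + k < (j : ℕ) * s := by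
              calc (j0 : ℕ) * s + k < (j0 : ℕ) * s + s := by omega
                _ = ((j0 : ℕ) + 1) * s := by ring
                _ ≤ (j : ℕ) * s := Nat.mul_le_mul_right s h1
            omega
        have : s ≤ (j0 : ℕ) * s + k - (j : ℕ) * s := by
          have h2 : ((j : ℕ) + 1) * s ≤ (j0 : ℕ) * s := Nat.mul_le_mul_right s hjlt
          rw [add_mul, one_mul] at h2
          omega
        exact_mod_cast Nat.cast_le.mpr this
      · rw [if_neg hle]
    · intro hj0; exact absurd (Finset.mem_univ j0) hj0
  · apply Polynomial.coeff_eq_zero_of_degree_lt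
    exact lt_of_lt_of_le (hdeg j0) (by exact_mod_cast Nat.not_lt.mp hk)

noncomputable instance degreeLT_fd (F : Type*) [Field F] (s : ℕ) :
    FiniteDimensional F (Polynomial.degreeLT F s) :=
  LinearEquiv.finiteDimensional (Polynomial.degreeLTEquiv F s).symm

lemma finrank_degreeLT (F : Type*) [Field F] (s : ℕ) :
    Module.finrank F (Polynomial.degreeLT F s) = s := by
  rw [(Polynomial.degreeLTEquiv F s).finrank_eq, Module.finrank_fin_fun]

/-- Existence of a nonzero common kernel element when there are few encoders. -/
lemma exists_common_ker {F : Type*} [Field F] {N m s : ℕ} (hs : 0 < s)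
    (f : Fin N → ((Fin m → Polynomial.degreeLT F s) →ₗ[F] Polynomial.degreeLT F s))
    (T : Finset (Fin N)) (hT : T.card < m) :
    ∃ a : Fin m → Polynomial.degreeLT F s, a ≠ 0 ∧ ∀ i ∈ T, f i a = 0 := by
  set Φ : (Fin m → Polynomial.degreeLT F s) →ₗ[F]
      ({i : Fin N // i ∈ T} → Polynomial.degreeLT F s) :=
    LinearMap.pi (fun i => f i.1)
  have hfr1 : Module.finrank F (Fin m → Polynomial.degreeLT F s) = m * s := by
    rw [Module.finrank_pi_fintype]
    simp [finrank_degreeLT, Finset.sum_const, mul_comm]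
  have hfr2 : Module.finrank F ({i : Fin N // i ∈ T} → Polynomial.degreeLT F s)
      = T.card * s := by
    rw [Module.finrank_pi_fintype]
    simp [finrank_degreeLT, Finset.sum_const, mul_comm]
  have hninj : ¬ Function.Injective Φ := by
    intro hinj
    have := LinearMap.finrank_le_finrank_of_injective hinj
    rw [hfr1, hfr2] at this
    have := Nat.le_of_mul_le_mul_right this hs
    omega
  rw [Function.not_injective_iff] at hninj
  obtain ⟨x, y, hxy, hne⟩ := hninj
  refine ⟨x - y, sub_ne_zero.mpr hne, fun i hi => ?_⟩
  have := congrFun (by rw [map_sub, hxy, sub_self] : Φ (x - y) = 0) ⟨i, hi⟩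
  simpa [Φ] using this

/-- Converse for coded convolution (Theorem 4): if the master can always recover
the convolution `a * b` from the products of linearly encoded length-`s` blocks
returned by a fixed subset `S` of workers, then `|S| ≥ m + n - 1`. Length-`s`
vectors are modeled as polynomials of degree `< s`. -/
theorem stmt_14 (F : Type*) [Field F] (N m n s : ℕ)
    (hm : 0 < m) (hn : 0 < n) (hs : 0 < s)
    (L : Fin N → ((Fin m → Polynomial.degreeLT F s) →ₗ[F] Polynomial.degreeLT F s))
    (M : Fin N → ((Fin n → Polynomial.degreeLT F s) →ₗ[F] Polynomial.degreeLT F s))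
    (S : Finset (Fin N))
    (dec : ({i : Fin N // i ∈ S} → Polynomial F) → Polynomial F)
    (hdec : ∀ (a : Fin m → Polynomial.degreeLT F s) (b : Fin n → Polynomial.degreeLT F s),
      dec (fun i => ((L i.1 a : Polynomial F)) * ((M i.1 b : Polynomial F)))
        = (∑ j : Fin m, (a j : Polynomial F) * Polynomial.X ^ ((j : ℕ) * s))
          * (∑ j : Fin n, (b j : Polynomial F) * Polynomial.X ^ ((j : ℕ) * s))) :
    m + n - 1 ≤ S.card := by
  by_contra hcard
  push_neg at hcard
  -- split S into Sa (card ≤ m-1) and Sb (card ≤ n-1)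
  obtain ⟨Sa, hSa_sub, hSa_card⟩ :=
    Finset.exists_subset_card_eq (n := min (m - 1) S.card) (s := S) (Nat.min_le_right _ _)
  set Sb := S \ Sa with hSb
  have hSb_card : Sb.card = S.card - Sa.card := Finset.card_sdiff_of_subset hSa_sub
  have hSa_lt : Sa.card < m := by omega
  have hSb_lt : Sb.card < n := by omega
  obtain ⟨a, ha, hka⟩ := exists_common_ker hs L Sa hSa_lt
  obtain ⟨b, hb, hkb⟩ := exists_common_ker hs M Sb hSb_lt
  have h0 : (fun i : {i : Fin N // i ∈ S} => ((L i.1 a : Polynomial F)) * ((M i.1 b : Polynomial F)))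
      = fun i => ((L i.1 (0 : Fin m → Polynomial.degreeLT F s) : Polynomial F)) * ((M i.1 b : Polynomial F)) := by
    funext i
    by_cases hi : i.1 ∈ Sa
    · rw [hka i.1 hi]
      simp
    · have hib : i.1 ∈ Sb := Finset.mem_sdiff.mpr ⟨i.2, hi⟩
      rw [hkb i.1 hib]
      simp
  have key := hdec a b
  rw [h0, hdec (0 : Fin m → Polynomial.degreeLT F s) b] at key
  simp only [Pi.zero_apply, ZeroMemClass.coe_zero, zero_mul, Finset.sum_const_zero] at key
  rcases mul_eq_zero.mp key.symm with hP | hQ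
  · exact ha (blocks_eq_zero hs a hP)
  · exact hb (blocks_eq_zero hs b hQ)
end

section
/- Element-wise product recovery via polynomial codes: let F be a field with at least max(R, N) suitable distinct elements, and let u_0,...,u_{R-1} and v_0,...,v_{R-1} be elements of an F-algebra of matrices (u_i of size q x a, v_i of size q x b, with products u_i^T v_i). Let f and g be the unique polynomials of degree at most R-1 with f(x_i) = u_i and g(x_i) = v_i at R distinct points x_i. Let y_0,...,y_{N-1} be distinct points with N >= 2R - 1; worker i computes f(y_i)^T g(y_i). Then from any 2R - 1 of these worker results, all products u_i^T v_i (i = 0,...,R-1) can be recovered. -/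
open Matrix Finset Polynomial

noncomputable def prodPoly {F : Type*} [Field F] {R q a b : ℕ}
    (f : Fin R → Matrix (Fin q) (Fin a) F) (g : Fin R → Matrix (Fin q) (Fin b) F)
    (r : Fin a) (c : Fin b) : F[X] :=
  ∑ j : Fin R, ∑ k : Fin R, C (((f j)ᵀ * g k) r c) * X ^ ((j : ℕ) + k)

private lemma prodPoly_eval {F : Type*} [Field F] {R q a b : ℕ}
    (f : Fin R → Matrix (Fin q) (Fin a) F) (g : Fin R → Matrix (Fin q) (Fin b) F)
    (r : Fin a) (c : Fin b) (t : F) :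
    (prodPoly f g r c).eval t
      = ((∑ j : Fin R, t ^ (j : ℕ) • f j)ᵀ * (∑ j : Fin R, t ^ (j : ℕ) • g j)) r c := by
  simp only [prodPoly, eval_finset_sum, eval_mul, eval_C, eval_pow, eval_X,
    Matrix.mul_apply, Matrix.transpose_apply, Matrix.sum_apply, Matrix.smul_apply,
    smul_eq_mul, Finset.sum_mul, Finset.mul_sum]
  calc ∑ j : Fin R, ∑ k : Fin R, ∑ m : Fin q, f j m r * g k m c * t ^ ((j : ℕ) + k)
      = ∑ j : Fin R, ∑ m : Fin q, ∑ k : Fin R, f j m r * g k m c * t ^ ((j : ℕ) + k) :=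
        Finset.sum_congr rfl fun j _ => Finset.sum_comm
    _ = ∑ m : Fin q, ∑ j : Fin R, ∑ k : Fin R, f j m r * g k m c * t ^ ((j : ℕ) + k) :=
        Finset.sum_comm
    _ = ∑ m : Fin q, ∑ k : Fin R, ∑ j : Fin R,
          t ^ (j : ℕ) * f j m r * (t ^ (k : ℕ) * g k m c) := by
        refine Finset.sum_congr rfl fun m _ => Finset.sum_comm.trans ?_
        refine Finset.sum_congr rfl fun k _ => Finset.sum_congr rfl fun j _ => by
          rw [pow_add]; ring

private lemma prodPoly_natDegree {F : Type*} [Field F] {R q a b : ℕ}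
    (f : Fin R → Matrix (Fin q) (Fin a) F) (g : Fin R → Matrix (Fin q) (Fin b) F)
    (r : Fin a) (c : Fin b) : (prodPoly f g r c).natDegree ≤ 2 * R - 2 := by
  refine (Polynomial.natDegree_sum_le _ _).trans ?_
  rw [Finset.fold_max_le]
  refine ⟨Nat.zero_le _, fun j _ => ?_⟩
  refine (Polynomial.natDegree_sum_le _ _).trans ?_
  rw [Finset.fold_max_le]
  refine ⟨Nat.zero_le _, fun k _ => ?_⟩
  refine (Polynomial.natDegree_C_mul_le _ _).trans ?_
  rw [Polynomial.natDegree_X_pow]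
  omega

/-- Element-wise product recovery via the improved entangled polynomial code:
with `f, g` interpolating `u, v` at `R` distinct points `x_i` and workers
evaluating `f(y_i)ᵀ g(y_i)` at distinct points `y_i`, the products `u_iᵀ v_i`
are uniquely determined by the results of any `2R - 1` workers. -/
theorem stmt_18 (F : Type*) [Field F] (R N q a b : ℕ) (hR : 0 < R) (hN : 2 * R - 1 ≤ N)
    (x : Fin R → F) (hx : Function.Injective x)
    (y : Fin N → F) (hy : Function.Injective y)
    (u u' : Fin R → Matrix (Fin q) (Fin a) F) (v v' : Fin R → Matrix (Fin q) (Fin b) F)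
    (f f' : Fin R → Matrix (Fin q) (Fin a) F) (g g' : Fin R → Matrix (Fin q) (Fin b) F)
    (hf : ∀ i, ∑ j : Fin R, x i ^ (j : ℕ) • f j = u i)
    (hg : ∀ i, ∑ j : Fin R, x i ^ (j : ℕ) • g j = v i)
    (hf' : ∀ i, ∑ j : Fin R, x i ^ (j : ℕ) • f' j = u' i)
    (hg' : ∀ i, ∑ j : Fin R, x i ^ (j : ℕ) • g' j = v' i)
    (S : Finset (Fin N)) (hS : S.card = 2 * R - 1)
    (hagree : ∀ i ∈ S,
      (∑ j : Fin R, y i ^ (j : ℕ) • f j)ᵀ * (∑ j : Fin R, y i ^ (j : ℕ) • g j)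
        = (∑ j : Fin R, y i ^ (j : ℕ) • f' j)ᵀ * (∑ j : Fin R, y i ^ (j : ℕ) • g' j)) :
    ∀ i : Fin R, (u i)ᵀ * v i = (u' i)ᵀ * v' i := by
  classical
  intro i
  ext r c
  have hpoly : prodPoly f g r c = prodPoly f' g' r c := by
    have hz : prodPoly f g r c - prodPoly f' g' r c = 0 := by
      apply Polynomial.eq_zero_of_natDegree_lt_card_of_eval_eq_zero' _ (S.image y)
      · intro t ht
        obtain ⟨s, hsS, rfl⟩ := Finset.mem_image.mp ht
        have := hagree s hsS
        rw [Polynomial.eval_sub, prodPoly_eval, prodPoly_eval, this, sub_self]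
      · rw [Finset.card_image_of_injective _ hy, hS]
        have h1 := prodPoly_natDegree f g r c
        have h2 := prodPoly_natDegree f' g' r c
        have := Polynomial.natDegree_sub_le (prodPoly f g r c) (prodPoly f' g' r c)
        omega
    exact sub_eq_zero.mp hz
  rw [← hf, ← hg, ← hf', ← hg', ← prodPoly_eval, ← prodPoly_eval, hpoly]
end

section
/- Let R(p,m,n) denote the bilinear complexity of multiplying an m-by-p by a p-by-n matrix over a field F: the least R for which there exist tensors a in F^{R x p x m}, b in F^{R x p x n}, c in F^{R x m x n} with sum_i c_{ijk} (sum_{j',k'} A_{j'k'} a_{ij'k'})(sum_{j'',k''} B_{j''k''} b_{ij''k''}) = sum_l A_{lj} B_{lk} for all A in F^{p x m}, B in F^{p x n}. Then the optimum recovery threshold K*_linear of linear codes for distributed matrix multiplication with parameters p, m, n and N >= 2R(p,m,n) - 1 workers satisfies R(p,m,n) <= K*_linear <= 2R(p,m,n) - 1. -/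
open Matrix Finset Polynomial

private lemma sum_comm₃ {M : Type*} [AddCommMonoid M] {a b c : Type*}
    [Fintype a] [Fintype b] [Fintype c] (f : a → b → c → M) :
    ∑ x, ∑ y, ∑ z, f x y z = ∑ z, ∑ x, ∑ y, f x y z := by
  calc ∑ x, ∑ y, ∑ z, f x y z = ∑ x, ∑ z, ∑ y, f x y z :=
        Finset.sum_congr rfl fun x _ => Finset.sum_comm
    _ = ∑ z, ∑ x, ∑ y, f x y z := Finset.sum_comm

private lemma lagrange_eval_eq {F : Type*} [Field F] {ι : Type*} [DecidableEq ι]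
    (S : Finset ι) (v : ι → F) (hv : Set.InjOn v S) (f : Polynomial F)
    (hf : f.degree < S.card) (x : F) :
    f.eval x = ∑ i ∈ S, f.eval (v i) * (Lagrange.basis S v i).eval x := by
  conv_lhs => rw [Lagrange.eq_interpolate hv hf]
  rw [Lagrange.interpolate_apply]
  simp [Polynomial.eval_finset_sum]


/-- Theorem 3: the optimum linear recovery threshold `K*_linear` for distributed
matrix multiplication with parameters `p, m, n` and `N ≥ 2R(p,m,n) - 1` workers
satisfies `R(p,m,n) ≤ K*_linear ≤ 2R(p,m,n) - 1`, where `R(p,m,n)` is the bilinear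
complexity of multiplying an `m×p` matrix by a `p×n` matrix. -/
theorem stmt_19 (F : Type*) [Field F] (p m n N sp rm tn : ℕ)
    (hp : 0 < p) (hm : 0 < m) (hn : 0 < n)
    (hsp : 0 < sp) (hrm : 0 < rm) (htn : 0 < tn)
    (hF : ∃ z : Fin N → F, Function.Injective z)
    (Rbl Klin : ℕ)
    -- `Rbl` is the bilinear complexity `R(p,m,n)`:
    (hRbl : IsLeast {R : ℕ |
      ∃ (a : Fin R → Fin p → Fin m → F) (b : Fin R → Fin p → Fin n → F)
        (c : Fin R → Fin m → Fin n → F),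
        ∀ (A : Matrix (Fin p) (Fin m) F) (B : Matrix (Fin p) (Fin n) F)
          (j : Fin m) (k : Fin n),
          ∑ i, c i j k *
              ((∑ j' : Fin p, ∑ k' : Fin m, A j' k' * a i j' k') *
                (∑ j'' : Fin p, ∑ k'' : Fin n, B j'' k'' * b i j'' k''))
            = ∑ l : Fin p, A l j * B l k} Rbl)
    (hN : 2 * Rbl - 1 ≤ N)
    -- `Klin` is the optimum linear recovery threshold:
    (hKlin : IsLeast {K : ℕ | K ≤ N ∧
      ∃ (a : Fin N → Fin p → Fin m → F) (b : Fin N → Fin p → Fin n → F),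
        ∀ S : Finset (Fin N), S.card = K →
          ∃ c : Fin N → Fin m → Fin n → F,
            ∀ (A : Fin p → Fin m → Matrix (Fin sp) (Fin rm) F)
              (B : Fin p → Fin n → Matrix (Fin sp) (Fin tn) F)
              (k : Fin m) (k' : Fin n),
              ∑ i ∈ S, c i k k' •
                  ((∑ j : Fin p, ∑ l : Fin m, a i j l • A j l)ᵀ *
                    (∑ j : Fin p, ∑ l : Fin n, b i j l • B j l))
                = ∑ j : Fin p, (A j k)ᵀ * B j k'} Klin) :
    Rbl ≤ Klin ∧ Klin ≤ 2 * Rbl - 1 := by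
  obtain ⟨z, hz⟩ := hF
  obtain ⟨α, β, γ, hT⟩ := hRbl.1
  -- `Rbl ≥ 1`
  have hR1 : 1 ≤ Rbl := by
    rcases Nat.eq_zero_or_pos Rbl with h0 | h; swap; · exact h
    exfalso
    have h1 := hT (Matrix.of fun l _ => if l = (⟨0, hp⟩ : Fin p) then (1 : F) else 0)
      (Matrix.of fun l _ => if l = (⟨0, hp⟩ : Fin p) then (1 : F) else 0) ⟨0, hm⟩ ⟨0, hn⟩
    subst h0
    simp at h1
  have hRN : Rbl ≤ N := le_trans (by omega) hN
  constructor
  · -- lower bound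
    obtain ⟨hKN, a, b, hdec⟩ := hKlin.1
    obtain ⟨S, hSsub, hScard⟩ := Finset.exists_subset_card_eq
      (show Klin ≤ (Finset.univ : Finset (Fin N)).card by simpa using hKN)
    obtain ⟨c, hc⟩ := hdec S hScard
    have e : {x // x ∈ S} ≃ Fin Klin :=
      Fintype.equivFinOfCardEq (by simpa [Fintype.card_coe] using hScard)
    set u0 : Fin sp := ⟨0, hsp⟩ with hu0
    set v0 : Fin rm := ⟨0, hrm⟩ with hv0
    set w0 : Fin tn := ⟨0, htn⟩ with hw0
    set J : Matrix (Fin sp) (Fin rm) F := Matrix.single u0 v0 1 with hJ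
    set J' : Matrix (Fin sp) (Fin tn) F := Matrix.single u0 w0 1 with hJ'
    have hJJ' : (Jᵀ * J') v0 w0 = 1 := by
      simp [hJ, hJ', Matrix.mul_apply, Matrix.single]
    have h3 : ∀ x y : F, ((x • J)ᵀ * (y • J')) v0 w0 = x * y := by
      intro x y
      rw [Matrix.transpose_smul, Matrix.smul_mul, Matrix.mul_smul]
      simp [Matrix.smul_apply, smul_eq_mul, hJJ']
    apply hRbl.2
    refine ⟨fun r => a ((e.symm r : {x // x ∈ S}) : Fin N),
            fun r => b ((e.symm r : {x // x ∈ S}) : Fin N),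
            fun r => c ((e.symm r : {x // x ∈ S}) : Fin N), ?_⟩
    intro Ah Bh j k
    have h1 : ∀ i : Fin N, ∑ j', ∑ l, a i j' l • (Ah j' l • J)
        = (∑ j', ∑ l, Ah j' l * a i j' l) • J := by
      intro i
      rw [Finset.sum_smul]
      refine Finset.sum_congr rfl fun j' _ => ?_
      rw [Finset.sum_smul]
      refine Finset.sum_congr rfl fun l _ => ?_
      rw [smul_smul, mul_comm]
    have h2 : ∀ i : Fin N, ∑ j', ∑ l, b i j' l • (Bh j' l • J')
        = (∑ j', ∑ l, Bh j' l * b i j' l) • J' := by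
      intro i
      rw [Finset.sum_smul]
      refine Finset.sum_congr rfl fun j' _ => ?_
      rw [Finset.sum_smul]
      refine Finset.sum_congr rfl fun l _ => ?_
      rw [smul_smul, mul_comm]
    have key := hc (fun j' l => Ah j' l • J) (fun j' l => Bh j' l • J') j k
    simp_rw [h1, h2] at key
    have key2 := Matrix.ext_iff.mpr key v0 w0
    simp only [Matrix.sum_apply, Matrix.smul_apply, smul_eq_mul] at key2
    simp_rw [h3] at key2
    have hsum : ∀ f : Fin N → F,
        ∑ r : Fin Klin, f ((e.symm r : {x // x ∈ S}) : Fin N) = ∑ i ∈ S, f i := by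
      intro f
      rw [← Finset.sum_attach S f, ← Finset.univ_eq_attach]
      exact Equiv.sum_comp e.symm fun x : {x // x ∈ S} => f ↑x
    exact (hsum fun i => c i j k *
      ((∑ j', ∑ k'', Ah j' k'' * a i j' k'') *
        (∑ j'', ∑ k'', Bh j'' k'' * b i j'' k''))).trans key2
  · -- upper bound
    refine hKlin.2 ⟨hN, ?_⟩
    set ω : Fin Rbl → F := fun r => z (Fin.castLE hRN r) with hωdef
    have hωinj : Set.InjOn ω (Finset.univ : Finset (Fin Rbl)) := by
      intro r _ s _ h
      have h2 : Fin.castLE hRN r = Fin.castLE hRN s := hz h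
      exact Fin.castLE_injective hRN h2
    set E : Fin Rbl → Polynomial F := fun r => Lagrange.basis Finset.univ ω r with hEdef
    have hEdeg : ∀ r, (E r).degree = ((Rbl - 1 : ℕ) : WithBot ℕ) := by
      intro r
      have := Lagrange.degree_basis hωinj (Finset.mem_univ r)
      simpa using this
    have hEval : ∀ r r' : Fin Rbl, (E r).eval (ω r') = if r' = r then 1 else 0 := by
      intro r r'
      by_cases h : r' = r
      · subst h; simp [hEdef, Lagrange.eval_basis_self hωinj (Finset.mem_univ r')]
      · simp [h, hEdef, Lagrange.eval_basis_of_ne (Ne.symm h) (Finset.mem_univ r')]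
    refine ⟨fun i j l => ∑ r, α r j l * (E r).eval (z i),
            fun i j l => ∑ r, β r j l * (E r).eval (z i), ?_⟩
    intro S hS
    have hzS : Set.InjOn z S := fun x _ y _ h => hz h
    refine ⟨fun i k k' => ∑ r, γ r k k' * (Lagrange.basis S z i).eval (ω r), ?_⟩
    intro A B k k'
    set P : Fin Rbl → Matrix (Fin sp) (Fin rm) F := fun r => ∑ j, ∑ l, α r j l • A j l with hPdef
    set Q : Fin Rbl → Matrix (Fin sp) (Fin tn) F := fun r => ∑ j, ∑ l, β r j l • B j l with hQdef
    -- coefficient identity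
    have hcoef : ∀ r s : Fin Rbl,
        ∑ i ∈ S, (∑ r', γ r' k k' * (Lagrange.basis S z i).eval (ω r')) *
            ((E r).eval (z i) * (E s).eval (z i))
          = if r = s then γ r k k' else 0 := by
      intro r s
      have hdeg : (E r * E s).degree < (S.card : WithBot ℕ) := by
        rw [Polynomial.degree_mul, hEdeg r, hEdeg s, hS, ← Nat.cast_add]
        exact_mod_cast (by omega : Rbl - 1 + (Rbl - 1) < 2 * Rbl - 1)
      have hint : ∀ r' : Fin Rbl, (E r * E s).eval (ω r') =
          ∑ i ∈ S, (E r * E s).eval (z i) * (Lagrange.basis S z i).eval (ω r') :=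
        fun r' => lagrange_eval_eq S z hzS _ hdeg (ω r')
      calc ∑ i ∈ S, (∑ r', γ r' k k' * (Lagrange.basis S z i).eval (ω r')) *
              ((E r).eval (z i) * (E s).eval (z i))
          = ∑ r', γ r' k k' *
              ∑ i ∈ S, (E r * E s).eval (z i) * (Lagrange.basis S z i).eval (ω r') := by
            simp_rw [Finset.sum_mul]
            rw [Finset.sum_comm]
            refine Finset.sum_congr rfl fun r' _ => ?_
            rw [Finset.mul_sum]
            refine Finset.sum_congr rfl fun i _ => ?_
            rw [Polynomial.eval_mul]; ring
        _ = ∑ r', γ r' k k' * (E r * E s).eval (ω r') := by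
            refine Finset.sum_congr rfl fun r' _ => ?_
            rw [← hint r']
        _ = ∑ r', γ r' k k' *
              ((if r' = r then (1:F) else 0) * (if r' = s then (1:F) else 0)) := by
            simp_rw [Polynomial.eval_mul, hEval]
        _ = if r = s then γ r k k' else 0 := by
            by_cases h : r = s
            · subst h
              rw [Finset.sum_eq_single r]
              · simp
              · intro b _ hb; simp [hb]
              · simp
            · rw [if_neg h]
              refine Finset.sum_eq_zero fun r' _ => ?_
              by_cases h1 : r' = r
              · subst h1; simp [fun h2 : r' = s => h (h2 ▸ rfl), h]
              · simp [h1]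
    -- encoding identities
    have encA : ∀ i : Fin N,
        ∑ j, ∑ l, (∑ r, α r j l * (E r).eval (z i)) • A j l
          = ∑ r, (E r).eval (z i) • P r := by
      intro i
      simp_rw [hPdef, Finset.sum_smul, Finset.smul_sum, smul_smul]
      rw [sum_comm₃]
      refine Finset.sum_congr rfl fun r _ => Finset.sum_congr rfl fun j _ =>
        Finset.sum_congr rfl fun l _ => by rw [mul_comm]
    have encB : ∀ i : Fin N,
        ∑ j, ∑ l, (∑ r, β r j l * (E r).eval (z i)) • B j l
          = ∑ r, (E r).eval (z i) • Q r := by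
      intro i
      simp_rw [hQdef, Finset.sum_smul, Finset.smul_sum, smul_smul]
      rw [sum_comm₃]
      refine Finset.sum_congr rfl fun r _ => Finset.sum_congr rfl fun j _ =>
        Finset.sum_congr rfl fun l _ => by rw [mul_comm]
    have prod_i : ∀ i : Fin N,
        (∑ r, (E r).eval (z i) • P r)ᵀ * (∑ s, (E s).eval (z i) • Q s)
          = ∑ r, ∑ s, ((E r).eval (z i) * (E s).eval (z i)) • ((P r)ᵀ * Q s) := by
      intro i
      rw [Matrix.transpose_sum]
      simp_rw [Matrix.transpose_smul, Matrix.sum_mul, Matrix.mul_sum, Matrix.mul_smul, Matrix.smul_mul,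
        smul_smul]
      refine Finset.sum_congr rfl fun r _ => Finset.sum_congr rfl fun s _ => by rw [mul_comm]
    calc ∑ i ∈ S, (∑ r', γ r' k k' * (Lagrange.basis S z i).eval (ω r')) •
            ((∑ j, ∑ l, (∑ r, α r j l * (E r).eval (z i)) • A j l)ᵀ *
              (∑ j, ∑ l, (∑ r, β r j l * (E r).eval (z i)) • B j l))
        = ∑ i ∈ S, ∑ r, ∑ s,
            ((∑ r', γ r' k k' * (Lagrange.basis S z i).eval (ω r')) *
              ((E r).eval (z i) * (E s).eval (z i))) • ((P r)ᵀ * Q s) := by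
          refine Finset.sum_congr rfl fun i _ => ?_
          rw [encA i, encB i, prod_i i, Finset.smul_sum]
          simp_rw [Finset.smul_sum, smul_smul]
      _ = ∑ r, ∑ s, (∑ i ∈ S,
            (∑ r', γ r' k k' * (Lagrange.basis S z i).eval (ω r')) *
              ((E r).eval (z i) * (E s).eval (z i))) • ((P r)ᵀ * Q s) := by
          rw [Finset.sum_comm]
          refine Finset.sum_congr rfl fun r _ => ?_
          rw [Finset.sum_comm]
          refine Finset.sum_congr rfl fun s _ => ?_
          rw [Finset.sum_smul]
      _ = ∑ r, ∑ s, (if r = s then γ r k k' else 0) • ((P r)ᵀ * Q s) := by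
          simp_rw [hcoef]
      _ = ∑ r, γ r k k' • ((P r)ᵀ * Q r) := by
          refine Finset.sum_congr rfl fun r _ => ?_
          rw [Finset.sum_eq_single r]
          · simp
          · intro s _ hs; simp [Ne.symm hs]
          · simp
      _ = ∑ j, (A j k)ᵀ * B j k' := by
          ext u v
          simp only [Matrix.sum_apply, Matrix.smul_apply, Matrix.mul_apply,
            Matrix.transpose_apply, smul_eq_mul]
          have hPentry : ∀ (r : Fin Rbl) (w : Fin sp), P r w u = ∑ j, ∑ l, A j l w u * α r j l := by
            intro r w
            simp [hPdef, Matrix.sum_apply, Matrix.smul_apply, smul_eq_mul, mul_comm]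
          have hQentry : ∀ (r : Fin Rbl) (w : Fin sp), Q r w v = ∑ j, ∑ l, B j l w v * β r j l := by
            intro r w
            simp [hQdef, Matrix.sum_apply, Matrix.smul_apply, smul_eq_mul, mul_comm]
          calc ∑ r, γ r k k' * ∑ w, P r w u * Q r w v
              = ∑ w, ∑ r, γ r k k' * (P r w u * Q r w v) := by
                simp_rw [Finset.mul_sum]; rw [Finset.sum_comm]
            _ = ∑ w, ∑ j, A j k w u * B j k' w v := by
                refine Finset.sum_congr rfl fun w _ => ?_
                have h3 := hT (Matrix.of fun j l => A j l w u)
                  (Matrix.of fun j l => B j l w v) k k'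
                simp only [Matrix.of_apply] at h3
                simp_rw [hPentry, hQentry]
                exact h3
            _ = ∑ j, ∑ w, A j k w u * B j k' w v := Finset.sum_comm
end
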